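/- Let A be a complete noetherian local ring with a surjective local homomorphism λ : A → O onto a discrete valuation ring with kernel p of height 0, such that A_p is a field (i.e. A is regular at p). Set I = Ann_A(p) = A[p]. For any finitely generated A-module M with depth_A M ≥ 1, the quotient M/(M[p] + M[I]) is naturally isomorphic to the cokernel of the composite M[p] → M/pM → (M/pM)/tors(M/pM). -/

import Mathlib

/-- The height of a prime ideal. -/
noncomputable def idealHeight {A : Type*} [CommRing A] (p : Ideal A) [hp : p.IsPrime] : ℕ∞ :=
  Order.height (⟨p, hp⟩ : PrimeSpectrum A)

/-- The grade of an ideal `I` on a module `M`. -/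
noncomputable def seqGrade {A : Type*} [CommRing A] (I : Ideal A)
    (M : Type*) [AddCommGroup M] [Module A M] : ℕ∞ :=
  sSup {n : ℕ∞ | ∃ rs : List A, (rs.length : ℕ∞) = n ∧ (∀ r ∈ rs, r ∈ I) ∧
    RingTheory.Sequence.IsRegular M rs}

/-- The depth of a module over a local ring. -/
noncomputable def moduleDepth (A : Type*) [CommRing A] [IsLocalRing A]
    (M : Type*) [AddCommGroup M] [Module A M] : ℕ∞ :=
  seqGrade (IsLocalRing.maximalIdeal A) M

theorem aux_exists_regular (A : Type*) [CommRing A] [IsLocalRing A]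
    (M : Type*) [AddCommGroup M] [Module A M]
    (h : 1 ≤ moduleDepth A M) :
    ∃ r ∈ IsLocalRing.maximalIdeal A, IsSMulRegular M r := by
  unfold moduleDepth seqGrade at h
  by_contra hc
  push_neg at hc
  have hle : sSup {n : ℕ∞ | ∃ rs : List A,
      (rs.length : ℕ∞) = n ∧ (∀ r ∈ rs, r ∈ IsLocalRing.maximalIdeal A) ∧
      RingTheory.Sequence.IsRegular M rs} ≤ 0 := by
    apply sSup_le
    rintro n ⟨rs, hlen, hmem, hreg⟩
    match rs, hlen with
    | [], hlen => simp [← hlen]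
    | r :: rest, hlen =>
      exfalso
      have hw := hreg.toIsWeaklyRegular
      rw [RingTheory.Sequence.isWeaklyRegular_cons_iff] at hw
      exact hc r (hmem r (by simp)) hw.1
  exact absurd (h.trans hle) (by norm_num)

theorem aux_exists_ann_not_mem (A : Type*) [CommRing A] [IsNoetherianRing A]
    (p : Ideal A) [hp : p.IsPrime] (hf : IsField (Localization.AtPrime p)) :
    ∃ s, s ∉ p ∧ ∀ y ∈ p, s * y = 0 := by
  classical
  have key : ∀ y ∈ p, ∃ s, s ∉ p ∧ s * y = 0 := by
    intro y hy
    have h1 : ¬ IsUnit (algebraMap A (Localization.AtPrime p) y) := by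
      rw [IsLocalization.AtPrime.isUnit_to_map_iff (Localization.AtPrime p) p]
      exact fun h => h hy
    have h0 : algebraMap A (Localization.AtPrime p) y = 0 := by
      by_contra h2
      obtain ⟨b, hb⟩ := hf.mul_inv_cancel h2
      exact h1 (IsUnit.of_mul_eq_one b hb)
    rw [IsLocalization.map_eq_zero_iff p.primeCompl] at h0
    obtain ⟨m, hm⟩ := h0
    exact ⟨m, m.2, hm⟩
  obtain ⟨S, hS⟩ := (isNoetherianRing_iff_ideal_fg A).mp ‹_› p
  choose! f hf1 hf2 using key
  refine ⟨∏ x ∈ S, f x, fun hmem => ?_, ?_⟩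
  · obtain ⟨x, hx, hxp⟩ := Ideal.IsPrime.prod_mem_iff.mp hmem
    exact hf1 x (hS ▸ Ideal.subset_span hx) hxp
  · have hgen : ∀ x ∈ S, (∏ z ∈ S, f z) * x = 0 := by
      intro x hx
      rw [← Finset.mul_prod_erase S f hx, mul_comm (f x), mul_assoc,
        hf2 x (hS ▸ Ideal.subset_span hx), mul_zero]
    intro y hy
    rw [← hS] at hy
    induction hy using Submodule.span_induction with
    | mem x hx => exact hgen x hx
    | zero => simp
    | add x z _ _ h1 h2 => rw [mul_add, h1, h2, add_zero]
    | smul a x _ h1 =>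
      rw [smul_eq_mul]
      rw [show (∏ z ∈ S, f z) * (a * x) = a * ((∏ z ∈ S, f z) * x) by ring, h1, mul_zero]

theorem aux_key_vanish (O A : Type*) [CommRing O] [IsDomain O] [IsDiscreteValuationRing O]
    [CommRing A] [IsLocalRing A] (l : A →+* O) (hl : Function.Surjective l) [IsLocalHom l]
    (M : Type*) [AddCommGroup M] [Module A M]
    (r : A) (hr : r ∈ IsLocalRing.maximalIdeal A) (hreg : IsSMulRegular M r)
    (s : A) (hs : s ∉ RingHom.ker l) (x : M) (hsx : s • x = 0)
    (hpx : ∀ y ∈ RingHom.ker l, y • x = 0) : x = 0 := by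
  by_cases hr0 : l r = 0
  · exact hreg (show r • x = r • 0 by rw [hpx r hr0, smul_zero])
  · have hru : ¬ IsUnit (l r) := fun h => hr ((isUnit_map_iff l r).mp h)
    obtain ⟨π, hπ⟩ := IsDiscreteValuationRing.exists_irreducible O
    obtain ⟨n, u, hsu⟩ := IsDiscreteValuationRing.eq_unit_mul_pow_irreducible hs hπ
    obtain ⟨m, w, hrw⟩ := IsDiscreteValuationRing.eq_unit_mul_pow_irreducible hr0 hπ
    have hm : m ≠ 0 := by
      rintro rfl
      exact hru (by rw [hrw, pow_zero, mul_one]; exact w.isUnit)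
    have hdvd : l s ∣ (l r) ^ n := by
      have h1 : π ∣ l r := by
        rw [hrw]
        exact Dvd.dvd.mul_left (dvd_pow_self π hm) _
      have h2 : π ^ n ∣ (l r) ^ n := pow_dvd_pow_of_dvd h1 n
      calc l s ∣ π ^ n := ⟨(↑u⁻¹ : Oˣ), by rw [hsu, mul_comm (u : O), mul_assoc, Units.mul_inv, mul_one]⟩
        _ ∣ (l r) ^ n := h2
    obtain ⟨c, hc⟩ := hdvd
    obtain ⟨a, rfl⟩ := hl c
    have hk : r ^ n - s * a ∈ RingHom.ker l := by
      simp [RingHom.mem_ker, map_sub, map_mul, map_pow, hc]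
    have h4 : (r ^ n) • x = 0 := by
      have h3 := hpx _ hk
      rw [sub_smul, sub_eq_zero] at h3
      rw [h3, mul_comm, mul_smul, hsx, smul_zero]
    exact (hreg.pow n) (show (r^n) • x = (r^n) • 0 by rw [h4, smul_zero])

/-- Let `A` be a complete noetherian local ring, `λ : A → O` a
surjection onto a discrete valuation ring with kernel `p` of height `0` such that
`A_p` is a field, and set `I = A[p] = (0 :_A p)`.  For any finitely generated
`A`-module `M` with `depth_A M ≥ 1`, the natural map from `M` onto the cokernel of
`M[p] → M/pM → (M/pM)/tors` has kernel exactly `M[p] + M[I]`; that is,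
`M/(M[p] + M[I])` is naturally isomorphic to this cokernel (the congruence module). -/
theorem quotient_iso_congruence_module_codim_zero
    (O A : Type*) [CommRing O] [IsDomain O] [IsDiscreteValuationRing O]
    [CommRing A] [IsNoetherianRing A] [IsLocalRing A]
    [IsAdicComplete (IsLocalRing.maximalIdeal A) A]
    (l : A →+* O) (hl : Function.Surjective l) [IsLocalHom l]
    (M : Type*) [AddCommGroup M] [Module A M] [Module.Finite A M] :
    haveI : (RingHom.ker l).IsPrime := RingHom.ker_isPrime l
    let p : Ideal A := RingHom.ker l
    let I : Ideal A := Submodule.colon (⊥ : Ideal A) p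
    let Mp : Submodule A M := Submodule.torsionBySet A M (p : Set A)
    let MI : Submodule A M := Submodule.torsionBySet A M (I : Set A)
    let N1 : Submodule A M := p • ⊤
    let T : Submodule A (M ⧸ N1) := Submodule.torsion' A (M ⧸ N1) p.primeCompl
    let j : Mp →ₗ[A] ((M ⧸ N1) ⧸ T) := T.mkQ ∘ₗ N1.mkQ ∘ₗ Mp.subtype
    let φ : M →ₗ[A] (((M ⧸ N1) ⧸ T) ⧸ LinearMap.range j) :=
      (LinearMap.range j).mkQ ∘ₗ T.mkQ ∘ₗ N1.mkQ
    idealHeight p = 0 →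
    IsField (Localization.AtPrime p) →
    1 ≤ moduleDepth A M →
    (LinearMap.ker φ = Mp ⊔ MI ∧ Function.Surjective φ) := by
  haveI : (RingHom.ker l).IsPrime := RingHom.ker_isPrime l
  intro p I Mp MI N1 T j φ hht hfield hdepth
  haveI hp : p.IsPrime := RingHom.ker_isPrime l
  obtain ⟨r, hrmax, hreg⟩ := aux_exists_regular A M hdepth
  obtain ⟨s₀, hs₀p, hs₀ann⟩ := aux_exists_ann_not_mem A p hfield
  have hs₀I : s₀ ∈ I := by
    rw [Submodule.mem_colon]
    intro y hy
    simp only [Ideal.mem_bot, smul_eq_mul]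
    exact hs₀ann y hy
  -- elements of I kill N1 = p • ⊤
  have hkill : ∀ t ∈ I, ∀ z ∈ N1, t • z = 0 := by
    intro t ht z hz
    refine Submodule.smul_induction_on hz (fun y hy n _ => ?_) (fun a b ha hb => ?_)
    · rw [smul_smul, show t * y = 0 from by
        simpa using (Submodule.mem_colon.mp ht) y hy, zero_smul]
    · rw [smul_add, ha, hb, add_zero]
  constructor
  · apply le_antisymm
    · intro m hm
      rw [LinearMap.mem_ker] at hm
      have h1 : T.mkQ (N1.mkQ m) ∈ LinearMap.range j := by
        rw [← Submodule.ker_mkQ (LinearMap.range j)]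
        exact hm
      obtain ⟨⟨x, hx⟩, hjx⟩ := h1
      have h2 : N1.mkQ (m - x) ∈ T := by
        rw [← Submodule.ker_mkQ T, LinearMap.mem_ker, map_sub, map_sub]
        have : T.mkQ (N1.mkQ x) = T.mkQ (N1.mkQ m) := hjx
        rw [this, sub_self]
      obtain ⟨⟨s, hs⟩, hsz⟩ := (Submodule.mem_torsion'_iff _ _).mp h2
      have h3 : s • (m - x) ∈ N1 := by
        rw [← Submodule.Quotient.mk_eq_zero]
        rw [Submodule.Quotient.mk_smul]
        exact hsz
      have h4 : m - x ∈ MI := by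
        rw [Submodule.mem_torsionBySet_iff]
        rintro ⟨t, ht⟩
        show t • (m - x) = 0
        refine aux_key_vanish O A l hl M r hrmax hreg s hs (t • (m - x)) ?_ ?_
        · rw [smul_comm]
          exact hkill t ht _ h3
        · intro y hy
          rw [smul_smul, show y * t = 0 from ?_, zero_smul]
          have := Submodule.mem_colon.mp ht y hy
          simpa [mul_comm] using this
      have hmx : m = x + (m - x) := by abel
      rw [hmx]
      exact Submodule.add_mem_sup hx h4
    · apply sup_le
      · intro m hm
        rw [LinearMap.mem_ker]
        have hr : T.mkQ (N1.mkQ m) ∈ LinearMap.range j := ⟨⟨m, hm⟩, rfl⟩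
        show (LinearMap.range j).mkQ (T.mkQ (N1.mkQ m)) = 0
        rw [← Submodule.ker_mkQ (LinearMap.range j)] at hr
        exact hr
      · intro m hm
        rw [LinearMap.mem_ker]
        have h5 : s₀ • m = 0 := (Submodule.mem_torsionBySet_iff _ _).mp hm ⟨s₀, hs₀I⟩
        have h6 : N1.mkQ m ∈ T := by
          rw [Submodule.mem_torsion'_iff]
          refine ⟨⟨s₀, hs₀p⟩, ?_⟩
          show s₀ • N1.mkQ m = 0
          rw [← map_smul, h5, map_zero]
        show (LinearMap.range j).mkQ (T.mkQ (N1.mkQ m)) = 0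
        rw [show T.mkQ (N1.mkQ m) = 0 from by
          rw [← Submodule.ker_mkQ T] at h6; exact h6, map_zero]
  · exact (Submodule.mkQ_surjective _).comp
      ((Submodule.mkQ_surjective _).comp (Submodule.mkQ_surjective _))
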